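/- The language model embeds into a generalised relational model: for a set X, the map ι : P(X*) → P(X* × X*) defined by ι(L) = {(u, uv) | u ∈ X*, v ∈ L} is injective and preserves union, language concatenation to relational composition, Kleene star to reflexive-transitive closure, ∅ to ∅, {ε} to the identity relation, and the full language X* to the prefix relation {(u, uv) | u, v ∈ X*}. -/
import Mathlib


/-- Relational composition of subsets of `X × X`. -/
def rcomp {X : Type*} (R S : Set (X × X)) : Set (X × X) :=
  {p | ∃ y : X, (p.1, y) ∈ R ∧ (y, p.2) ∈ S}

/-- The identity relation. -/
def ridRel {X : Type*} : Set (X × X) := {p | p.1 = p.2}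

/-- `n`-fold relational composition. -/
def rpow {X : Type*} (R : Set (X × X)) : ℕ → Set (X × X)
  | 0 => ridRel
  | n + 1 => rcomp R (rpow R n)

/-- Reflexive-transitive closure of a relation. -/
def rstar {X : Type*} (R : Set (X × X)) : Set (X × X) := ⋃ n : ℕ, rpow R n

/-- The embedding of languages over `X` into relations on `X*`:
`ι(L) = {(u, uv) | u ∈ X*, v ∈ L}`. -/
def iotaEmb {X : Type*} (L : Language X) : Set (List X × List X) :=
  {p | ∃ u v : List X, v ∈ L ∧ p = (u, u ++ v)}


lemma mem_iotaEmb {X : Type*} {L : Language X} {p q : List X} :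
    (p, q) ∈ iotaEmb L ↔ ∃ v ∈ L, q = p ++ v := by
  constructor
  · rintro ⟨u, v, hv, h⟩
    injection h with h1 h2
    subst h1
    exact ⟨v, hv, h2⟩
  · rintro ⟨v, hv, rfl⟩
    exact ⟨p, v, hv, rfl⟩

lemma iotaEmb_mul {X : Type*} (L K : Language X) :
    iotaEmb (L * K) = rcomp (iotaEmb L) (iotaEmb K) := by
  ext ⟨p, q⟩
  simp only [mem_iotaEmb, rcomp, Set.mem_setOf_eq]
  constructor
  · rintro ⟨v, ⟨a, ha, b, hb, rfl⟩, rfl⟩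
    exact ⟨p ++ a, ⟨a, ha, rfl⟩, ⟨b, hb, by simp⟩⟩
  · rintro ⟨y, ⟨a, ha, rfl⟩, ⟨b, hb, rfl⟩⟩
    exact ⟨a ++ b, ⟨a, ha, b, hb, rfl⟩, by simp⟩

lemma iotaEmb_one {X : Type*} : iotaEmb (1 : Language X) = ridRel := by
  ext ⟨p, q⟩
  simp only [mem_iotaEmb, ridRel, Set.mem_setOf_eq]
  constructor
  · rintro ⟨v, hv, rfl⟩
    obtain rfl : v = [] := hv
    simp
  · rintro (rfl : p = q)
    exact ⟨[], rfl, by simp⟩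

lemma iotaEmb_pow {X : Type*} (L : Language X) (n : ℕ) :
    iotaEmb (L ^ n) = rpow (iotaEmb L) n := by
  induction n with
  | zero => rw [pow_zero]; exact iotaEmb_one
  | succ n ih => rw [pow_succ', iotaEmb_mul, ih]; rfl

/-- `ι` is injective and maps union to union, concatenation to relational
composition, Kleene star to reflexive-transitive closure, `∅` to `∅`, `{ε}` to the
identity relation, and the full language to the prefix relation. -/
theorem iotaEmb_embedding {X : Type*} :
    Function.Injective (iotaEmb (X := X)) ∧
    (∀ L K : Language X, iotaEmb (L + K) = iotaEmb L ∪ iotaEmb K) ∧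
    (∀ L K : Language X, iotaEmb (L * K) = rcomp (iotaEmb L) (iotaEmb K)) ∧
    (∀ L : Language X, iotaEmb (KStar.kstar L) = rstar (iotaEmb L)) ∧
    iotaEmb (0 : Language X) = ∅ ∧
    iotaEmb (1 : Language X) = ridRel ∧
    iotaEmb (⊤ : Language X) = {p | ∃ u v : List X, p = (u, u ++ v)} := by
  refine ⟨?_, ?_, iotaEmb_mul, ?_, ?_, iotaEmb_one, ?_⟩
  · intro L K h
    ext v
    have h' := Set.ext_iff.1 h (([] : List X), v)
    simp only [mem_iotaEmb] at h'
    constructor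
    · intro hv
      obtain ⟨w, hw, hw'⟩ := h'.1 ⟨v, hv, by simp⟩
      simpa using hw' ▸ hw
    · intro hv
      obtain ⟨w, hw, hw'⟩ := h'.2 ⟨v, hv, by simp⟩
      simpa using hw' ▸ hw
  · intro L K
    ext ⟨p, q⟩
    simp only [mem_iotaEmb, Set.mem_union]
    constructor
    · rintro ⟨v, hv | hv, rfl⟩
      · exact Or.inl ⟨v, hv, rfl⟩
      · exact Or.inr ⟨v, hv, rfl⟩
    · rintro (⟨v, hv, rfl⟩ | ⟨v, hv, rfl⟩)
      · exact ⟨v, Or.inl hv, rfl⟩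
      · exact ⟨v, Or.inr hv, rfl⟩
  · intro L
    ext ⟨p, q⟩
    simp only [mem_iotaEmb, rstar, Set.mem_iUnion]
    constructor
    · rintro ⟨v, hv, rfl⟩
      rw [Language.kstar_eq_iSup_pow, Language.mem_iSup] at hv
      obtain ⟨n, hn⟩ := hv
      exact ⟨n, (iotaEmb_pow L n) ▸ mem_iotaEmb.2 ⟨v, hn, rfl⟩⟩
    · rintro ⟨n, hn⟩
      rw [← iotaEmb_pow] at hn
      obtain ⟨v, hv, rfl⟩ := mem_iotaEmb.1 hn
      refine ⟨v, ?_, rfl⟩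
      rw [Language.kstar_eq_iSup_pow, Language.mem_iSup]
      exact ⟨n, hv⟩
  · ext ⟨p, q⟩
    simp only [mem_iotaEmb, Set.mem_empty_iff_false, iff_false]
    rintro ⟨v, hv, rfl⟩
    exact hv
  · ext ⟨p, q⟩
    simp only [mem_iotaEmb, Set.mem_setOf_eq]
    constructor
    · rintro ⟨v, _, rfl⟩
      exact ⟨p, v, rfl⟩
    · rintro ⟨u, v, h⟩
      injection h with h1 h2
      subst h1
      exact ⟨v, trivial, h2⟩
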